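/- arXiv:1305.6998 — 2 statements merged into one kernel-verified Lean document; each statement's English description precedes it below -/
import Mathlib

section
/- Let δ₁ ∈ [1/2, 1) and χₙ be as defined (χₙ(x) = 0 for |x| ≤ 1/n, χₙ = 1 − η/ηₙ on [1/n,1], χₙ = −1 + σ/σₙ on [−1,−1/n]). Then χₙ is odd, so ∫_{−1}^{1} χₙ = 0, and lim_{n→∞} ∫_{−1}^{1} χₙ(x)² dx = 2. Consequently the weighted Poincaré inequality ∫_{−1}^1 |x|^{2δ₁}(ψ')² ≥ λ ∫_{−1}^1 (ψ − ⟨ψ⟩)² fails for every λ > 0 on [−1,1] when δ₁ ∈ [1/2,1). -/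
/-!
On `[0, 1]` the function `χₙ` rises monotonically from `0` to `1`, so `0 ≤ χₙ ≤ 1` there, and
`δ ≥ 1/2` gives `ηₙ ≥ log n → ∞`, so `χₙ → 1` pointwise on `(0, 1]`. By oddness and dominated
convergence, `∫_{-1}^1 χₙ² = 2 ∫_0^1 χₙ² → 2`.

The `χₙ` are not `C¹`, so the failure of the Poincaré inequality is witnessed instead by the smooth
odd functions `ψ(x) = arsinh (m x) / arsinh m`. Since `|x| ψ'(x) ≤ 1 / arsinh m` and
`|x|^{2δ} ≤ |x|` on `[-1, 1]`, the weighted energy is at most `∫ ψ' / arsinh m = 2 / arsinh m`,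
while `ψ ≥ 1/2` on `[1/2, 1]` keeps `∫ ψ² ≥ 1/8`.
-/

open MeasureTheory Real Set Filter Topology
open scoped Interval

/-- `η(x) = ∫_x^1 |s|^{-2δ} ds`. -/
noncomputable def eta (δ x : ℝ) : ℝ := ∫ s in x..1, |s| ^ (-(2 * δ))

/-- `σ(x) = ∫_{-1}^x |s|^{-2δ} ds`. -/
noncomputable def sigm (δ x : ℝ) : ℝ := ∫ s in (-1 : ℝ)..x, |s| ^ (-(2 * δ))

/-- The cut-off functions `χₙ`. -/
noncomputable def chiN (δ : ℝ) (n : ℕ) (x : ℝ) : ℝ :=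
  if (n : ℝ)⁻¹ ≤ x then 1 - eta δ x / eta δ (n : ℝ)⁻¹
  else if x ≤ -(n : ℝ)⁻¹ then -1 + sigm δ x / sigm δ (-(n : ℝ)⁻¹)
  else 0

section SymmetricIntegrals

variable {E : Type*} [NormedAddCommGroup E] [NormedSpace ℝ E] {f : ℝ → E}

theorem Function.Odd.intervalIntegral_eq_zero (hf : f.Odd) (a : ℝ) :
    ∫ x in -a..a, f x = 0 := by
  have h : ∫ x in -a..a, f x = -∫ x in -a..a, f x := by
    calc ∫ x in -a..a, f x = ∫ x in -a..a, f (-x) := by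
          rw [intervalIntegral.integral_comp_neg, neg_neg]
      _ = -∫ x in -a..a, f x := by
          simp only [hf.eq, intervalIntegral.integral_neg]
  have h2 : (2 : ℝ) • ∫ x in -a..a, f x = 0 := by
    rw [two_smul]
    nth_rw 2 [h]
    exact add_neg_cancel _
  exact (smul_eq_zero.mp h2).resolve_left two_ne_zero

theorem Function.Even.intervalIntegral_eq_two_smul (hf : f.Even) {a : ℝ}
    (hfi : IntervalIntegrable f volume 0 a) :
    ∫ x in -a..a, f x = (2 : ℝ) • ∫ x in (0 : ℝ)..a, f x := by
  have hleft : ∫ x in -a..0, f x = ∫ x in (0 : ℝ)..a, f x := by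
    simpa [hf.eq] using (intervalIntegral.integral_comp_neg (a := 0) (b := a) f).symm
  have hfi' : IntervalIntegrable f volume (-a) 0 := by
    simpa [hf.eq] using ((IntervalIntegrable.iff_comp_neg (f := f)).mp hfi).symm
  rw [← intervalIntegral.integral_add_adjacent_intervals hfi' hfi, hleft, two_smul]

end SymmetricIntegrals

theorem intervalIntegrable_abs_rpow {r a b : ℝ} (ha : 0 < a) (hb : 0 < b) :
    IntervalIntegrable (fun s : ℝ => |s| ^ r) volume a b :=
  ContinuousOn.intervalIntegrable fun _ hs =>
    (continuous_abs.continuousAt.rpow_const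
      (Or.inl (abs_pos.2 (lt_min ha hb |>.trans_le hs.1).ne').ne')).continuousWithinAt

theorem sigm_eq_eta_neg (δ x : ℝ) : sigm δ x = eta δ (-x) := by
  simpa [eta, sigm] using
    (intervalIntegral.integral_comp_neg (a := -x) (b := 1) fun s => |s| ^ (-(2 * δ))).symm

theorem eta_one (δ : ℝ) : eta δ 1 = 0 := intervalIntegral.integral_same

theorem eta_nonneg (δ : ℝ) {x : ℝ} (hx : x ≤ 1) : 0 ≤ eta δ x :=
  intervalIntegral.integral_nonneg hx fun s _ => rpow_nonneg (abs_nonneg s) _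

theorem eta_antitoneOn (δ : ℝ) : AntitoneOn (eta δ) (Ioi 0) := by
  intro x hx y hy hxy
  have hsplit : eta δ x = (∫ s in x..y, |s| ^ (-(2 * δ))) + eta δ y :=
    (intervalIntegral.integral_add_adjacent_intervals
      (intervalIntegrable_abs_rpow hx hy) (intervalIntegrable_abs_rpow hy one_pos)).symm
  have hnonneg : 0 ≤ ∫ s in x..y, |s| ^ (-(2 * δ)) :=
    intervalIntegral.integral_nonneg hxy fun s _ => rpow_nonneg (abs_nonneg s) _
  linarith

theorem log_inv_le_eta {δ x : ℝ} (hδ : 1 / 2 ≤ δ) (hx : 0 < x) (hx1 : x ≤ 1) :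
    log x⁻¹ ≤ eta δ x := by
  have hinv : IntervalIntegrable (fun s : ℝ => s⁻¹) volume x 1 :=
    intervalIntegral.intervalIntegrable_inv (fun s hs => (lt_min hx one_pos |>.trans_le hs.1).ne')
      continuousOn_id
  rw [← one_div, ← integral_inv_of_pos hx one_pos]
  refine intervalIntegral.integral_mono_on hx1 hinv (intervalIntegrable_abs_rpow hx one_pos)
    fun s hs => ?_
  have hs0 : 0 < s := hx.trans_le hs.1
  rw [abs_of_pos hs0, ← rpow_neg_one]
  exact rpow_le_rpow_of_exponent_ge hs0 hs.2 (by linarith)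

theorem tendsto_eta_nhdsGT_zero {δ : ℝ} (hδ : 1 / 2 ≤ δ) :
    Tendsto (eta δ) (𝓝[>] 0) atTop := by
  refine tendsto_atTop_mono' _ ?_ (tendsto_log_atTop.comp tendsto_inv_nhdsGT_zero)
  filter_upwards [Ioc_mem_nhdsGT one_pos] with x hx
  exact log_inv_le_eta hδ hx.1 hx.2

section ChiN

variable {δ : ℝ} {n : ℕ}

theorem chiN_odd (hn : 0 < n) : (chiN δ n).Odd := by
  have hn' : 0 < (n : ℝ)⁻¹ := by positivity
  intro x
  simp only [chiN, sigm_eq_eta_neg, neg_neg]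
  split_ifs <;> first | (exfalso; linarith) | ring

theorem chiN_of_inv_le {x : ℝ} (hx : (n : ℝ)⁻¹ ≤ x) :
    chiN δ n x = 1 - eta δ x / eta δ (n : ℝ)⁻¹ := if_pos hx

theorem chiN_of_nonneg_of_lt_inv {x : ℝ} (hx0 : 0 ≤ x) (hx : x < (n : ℝ)⁻¹) :
    chiN δ n x = 0 := by
  have : ¬ x ≤ -(n : ℝ)⁻¹ := by linarith
  simp [chiN, hx.not_ge, this]

theorem chiN_one (hn : 0 < n) : chiN δ n 1 = 1 := by
  rw [chiN_of_inv_le (inv_le_one_of_one_le₀ (by exact_mod_cast hn)), eta_one, zero_div, sub_zero]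

theorem monotoneOn_chiN (hn : 0 < n) : MonotoneOn (chiN δ n) (Icc 0 1) := by
  have hn' : 0 < (n : ℝ)⁻¹ := by positivity
  have hetaN : 0 ≤ eta δ (n : ℝ)⁻¹ := eta_nonneg δ (inv_le_one_of_one_le₀ (by exact_mod_cast hn))
  intro x hx y hy hxy
  rcases lt_or_ge x (n : ℝ)⁻¹ with hxn | hxn
  · rw [chiN_of_nonneg_of_lt_inv hx.1 hxn]
    rcases lt_or_ge y (n : ℝ)⁻¹ with hyn | hyn
    · rw [chiN_of_nonneg_of_lt_inv hy.1 hyn]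
    · rw [chiN_of_inv_le hyn, sub_nonneg]
      exact div_le_one_of_le₀ (eta_antitoneOn δ hn' (hn'.trans_le hyn) hyn) hetaN
  · rw [chiN_of_inv_le hxn, chiN_of_inv_le (hxn.trans hxy)]
    gcongr
    exact eta_antitoneOn δ (hn'.trans_le hxn) (hn'.trans_le (hxn.trans hxy)) hxy

theorem chiN_mem_Icc (hn : 0 < n) {x : ℝ} (hx : x ∈ Icc (0 : ℝ) 1) : chiN δ n x ∈ Icc 0 1 :=
  ⟨(chiN_odd hn).map_zero ▸ monotoneOn_chiN hn ⟨le_rfl, zero_le_one⟩ hx hx.1,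
    chiN_one (δ := δ) hn ▸ monotoneOn_chiN hn hx ⟨zero_le_one, le_rfl⟩ hx.2⟩

theorem monotoneOn_sq_chiN (hn : 0 < n) : MonotoneOn (fun x => chiN δ n x ^ 2) (Icc 0 1) :=
  fun _ hx _ hy hxy => pow_le_pow_left₀ (chiN_mem_Icc hn hx).1 (monotoneOn_chiN hn hx hy hxy) 2

theorem intervalIntegrable_sq_chiN (hn : 0 < n) :
    IntervalIntegrable (fun x => chiN δ n x ^ 2) volume 0 1 :=
  MonotoneOn.intervalIntegrable (by rw [uIcc_of_le zero_le_one]; exact monotoneOn_sq_chiN hn)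

theorem tendsto_chiN (hδ : 1 / 2 ≤ δ) {x : ℝ} (hx : 0 < x) :
    Tendsto (fun n : ℕ => chiN δ n x) atTop (𝓝 1) := by
  have hinv : Tendsto (fun n : ℕ => (n : ℝ)⁻¹) atTop (𝓝[>] 0) :=
    tendsto_inv_atTop_nhdsGT_zero.comp tendsto_natCast_atTop_atTop
  have heta : Tendsto (fun n : ℕ => eta δ (n : ℝ)⁻¹) atTop atTop :=
    (tendsto_eta_nhdsGT_zero hδ).comp hinv
  have hlim : Tendsto (fun n : ℕ => 1 - eta δ x / eta δ (n : ℝ)⁻¹) atTop (𝓝 1) := by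
    simpa using tendsto_const_nhds.sub (tendsto_const_nhds.div_atTop heta)
  refine hlim.congr' ?_
  filter_upwards [(hinv.mono_right nhdsWithin_le_nhds).eventually (gt_mem_nhds hx)] with n hn
  exact (chiN_of_inv_le hn.le).symm

theorem tendsto_integral_sq_chiN_zero_one (hδ : 1 / 2 ≤ δ) :
    Tendsto (fun n : ℕ => ∫ x in (0 : ℝ)..1, chiN δ n x ^ 2) atTop (𝓝 1) := by
  have hIoc : Ι (0 : ℝ) 1 = Ioc 0 1 := uIoc_of_le zero_le_one
  have h : Tendsto (fun n : ℕ => ∫ x in (0 : ℝ)..1, chiN δ n x ^ 2) atTop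
      (𝓝 (∫ _ in (0 : ℝ)..1, (1 : ℝ))) :=
    intervalIntegral.tendsto_integral_filter_of_dominated_convergence (fun _ => 1) ?_ ?_
      intervalIntegrable_const ?_
  · simpa using h
  · filter_upwards [eventually_gt_atTop 0] with n hn
    rw [hIoc]
    exact (intervalIntegrable_sq_chiN hn).1.aestronglyMeasurable
  · filter_upwards [eventually_gt_atTop 0] with n hn
    refine ae_of_all _ fun x hx => ?_
    rw [hIoc] at hx
    have hχ := chiN_mem_Icc (δ := δ) hn (Ioc_subset_Icc_self hx)
    rw [Real.norm_eq_abs, abs_of_nonneg (by positivity)]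
    exact pow_le_one₀ hχ.1 hχ.2
  · refine ae_of_all _ fun x hx => ?_
    rw [hIoc] at hx
    simpa using (tendsto_chiN hδ hx.1).pow 2

theorem tendsto_integral_sq_chiN (hδ : 1 / 2 ≤ δ) :
    Tendsto (fun n : ℕ => ∫ x in (-1 : ℝ)..1, chiN δ n x ^ 2) atTop (𝓝 2) := by
  have h := (tendsto_integral_sq_chiN_zero_one hδ).const_mul 2
  rw [mul_one] at h
  refine h.congr' ?_
  filter_upwards [eventually_gt_atTop 0] with n hn
  have heven : (fun x => chiN δ n x ^ 2).Even := fun x => by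
    simp only [chiN_odd hn x, neg_sq]
  exact (heven.intervalIntegral_eq_two_smul (intervalIntegrable_sq_chiN hn)).symm

end ChiN

theorem Real.arsinh_le_two_mul_arsinh_half {m : ℝ} (hm : 0 ≤ m) :
    arsinh m ≤ 2 * arsinh (m / 2) := by
  rw [← arsinh_sinh (2 * arsinh (m / 2)), arsinh_le_arsinh, sinh_two_mul, sinh_arsinh]
  nlinarith [one_le_cosh (arsinh (m / 2))]

noncomputable def arsinhProfile (m x : ℝ) : ℝ := arsinh (m * x) / arsinh m

section ArsinhProfile

variable {m : ℝ}

theorem arsinhProfile_odd (m : ℝ) : (arsinhProfile m).Odd := fun x => by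
  simp only [arsinhProfile, mul_neg, arsinh_neg, neg_div]

theorem arsinhProfile_one (hm : 0 < m) : arsinhProfile m 1 = 1 := by
  rw [arsinhProfile, mul_one, div_self (arsinh_pos_iff.2 hm).ne']

theorem contDiff_arsinhProfile (m : ℝ) : ContDiff ℝ 1 (arsinhProfile m) :=
  (contDiff_arsinh.comp (contDiff_const.mul contDiff_id)).div_const _

theorem deriv_arsinhProfile (m : ℝ) :
    deriv (arsinhProfile m) = fun x => m / (√(1 + (m * x) ^ 2) * arsinh m) := by
  funext x
  refine (((hasDerivAt_arsinh (m * x)).comp x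
    ((hasDerivAt_id x).const_mul m)).div_const (arsinh m)).deriv.trans ?_
  field_simp

theorem continuous_deriv_arsinhProfile (m : ℝ) : Continuous (deriv (arsinhProfile m)) :=
  (contDiff_arsinhProfile m).continuous_deriv le_rfl

theorem abs_mul_deriv_arsinhProfile_le (hm : 0 < m) (x : ℝ) :
    |x| * deriv (arsinhProfile m) x ≤ (arsinh m)⁻¹ := by
  have hA : 0 < arsinh m := arsinh_pos_iff.2 hm
  have hroot : 0 < √(1 + (m * x) ^ 2) := sqrt_pos.2 (by positivity)
  have hmx : |m * x| ≤ √(1 + (m * x) ^ 2) := abs_le_sqrt (by linarith)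
  calc |x| * deriv (arsinhProfile m) x = |m * x| / √(1 + (m * x) ^ 2) * (arsinh m)⁻¹ := by
        rw [deriv_arsinhProfile, abs_mul, abs_of_pos hm]
        field_simp
    _ ≤ 1 * (arsinh m)⁻¹ := by
        gcongr
        exact div_le_one_of_le₀ hmx hroot.le
    _ = (arsinh m)⁻¹ := one_mul _

theorem integral_abs_rpow_mul_deriv_arsinhProfile_sq_le {δ : ℝ} (hδ : 1 / 2 ≤ δ) (hm : 0 < m) :
    ∫ x in (-1 : ℝ)..1, |x| ^ (2 * δ) * deriv (arsinhProfile m) x ^ 2 ≤ 2 / arsinh m := by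
  have hA : 0 < arsinh m := arsinh_pos_iff.2 hm
  have hd := continuous_deriv_arsinhProfile m
  have hd_nonneg : ∀ x, 0 ≤ deriv (arsinhProfile m) x := fun x => by
    rw [deriv_arsinhProfile]; positivity
  have hweight : Continuous fun x : ℝ => |x| ^ (2 * δ) :=
    continuous_abs.rpow_const fun _ => Or.inr (by linarith)
  have hpointwise : ∀ x ∈ Icc (-1 : ℝ) 1,
      |x| ^ (2 * δ) * deriv (arsinhProfile m) x ^ 2 ≤ (arsinh m)⁻¹ * deriv (arsinhProfile m) x := by
    intro x hx
    have hx1 : |x| ≤ 1 := abs_le.2 hx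
    have hrpow : |x| ^ (2 * δ) ≤ |x| := by
      simpa using rpow_le_rpow_of_exponent_ge' (abs_nonneg x) hx1 zero_le_one (by linarith)
    calc |x| ^ (2 * δ) * deriv (arsinhProfile m) x ^ 2
        ≤ |x| * deriv (arsinhProfile m) x * deriv (arsinhProfile m) x := by
          rw [sq, ← mul_assoc]
          exact mul_le_mul_of_nonneg_right (mul_le_mul_of_nonneg_right hrpow (hd_nonneg x))
            (hd_nonneg x)
      _ ≤ (arsinh m)⁻¹ * deriv (arsinhProfile m) x := by
          gcongr
          · exact hd_nonneg x
          · exact abs_mul_deriv_arsinhProfile_le hm x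
  have hFTC : ∫ x in (-1 : ℝ)..1, deriv (arsinhProfile m) x = 2 := by
    rw [intervalIntegral.integral_deriv_eq_sub
      (fun x _ => (contDiff_arsinhProfile m).differentiable one_ne_zero x)
      (hd.intervalIntegrable _ _), (arsinhProfile_odd m).eq, arsinhProfile_one hm]
    norm_num
  calc ∫ x in (-1 : ℝ)..1, |x| ^ (2 * δ) * deriv (arsinhProfile m) x ^ 2
      ≤ ∫ x in (-1 : ℝ)..1, (arsinh m)⁻¹ * deriv (arsinhProfile m) x :=
        intervalIntegral.integral_mono_on (by norm_num)
          ((hweight.mul (hd.pow 2)).intervalIntegrable _ _)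
          ((continuous_const.mul hd).intervalIntegrable _ _) hpointwise
    _ = 2 / arsinh m := by
        rw [intervalIntegral.integral_const_mul, hFTC, inv_mul_eq_div]

theorem half_le_arsinhProfile (hm : 0 < m) {x : ℝ} (hx : 1 / 2 ≤ x) :
    1 / 2 ≤ arsinhProfile m x := by
  have hA : 0 < arsinh m := arsinh_pos_iff.2 hm
  rw [arsinhProfile, le_div_iff₀ hA]
  calc 1 / 2 * arsinh m ≤ arsinh (m / 2) := by
        linarith [arsinh_le_two_mul_arsinh_half hm.le]
    _ ≤ arsinh (m * x) := arsinh_le_arsinh.2 (by nlinarith)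

theorem one_eighth_le_integral_sq_arsinhProfile (hm : 0 < m) :
    1 / 8 ≤ ∫ x in (-1 : ℝ)..1, arsinhProfile m x ^ 2 := by
  have hcont : Continuous fun x => arsinhProfile m x ^ 2 :=
    (contDiff_arsinhProfile m).continuous.pow 2
  calc (1 / 8 : ℝ) = ∫ _ in (1 / 2 : ℝ)..1, (1 / 2 : ℝ) ^ 2 := by norm_num
    _ ≤ ∫ x in (1 / 2 : ℝ)..1, arsinhProfile m x ^ 2 :=
        intervalIntegral.integral_mono_on (by norm_num) intervalIntegrable_const
          (hcont.intervalIntegrable _ _) fun x hx =>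
            pow_le_pow_left₀ (by norm_num) (half_le_arsinhProfile hm hx.1) 2
    _ ≤ ∫ x in (-1 : ℝ)..1, arsinhProfile m x ^ 2 :=
        intervalIntegral.integral_mono_interval (by norm_num) (by norm_num) le_rfl
          (ae_of_all _ fun x => sq_nonneg _) (hcont.intervalIntegrable _ _)

end ArsinhProfile

theorem not_exists_weighted_poincare {δ : ℝ} (hδ : 1 / 2 ≤ δ) :
    ¬ ∃ L > (0 : ℝ), ∀ ψ : ℝ → ℝ, ContDiff ℝ 1 ψ →
        ∫ x in (-1 : ℝ)..1, |x| ^ (2 * δ) * (deriv ψ x) ^ 2 ≥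
          L * ∫ x in (-1 : ℝ)..1, (ψ x - (1/2) * ∫ y in (-1 : ℝ)..1, ψ y) ^ 2 := by
  rintro ⟨L, hL, hpoincare⟩
  -- the profile with `arsinh m = 32 / L` has energy `≤ L / 16` but variance `≥ 1 / 8`
  have hm : 0 < sinh (32 / L) := sinh_pos_iff.2 (by positivity)
  have h := hpoincare _ (contDiff_arsinhProfile (sinh (32 / L)))
  rw [(arsinhProfile_odd _).intervalIntegral_eq_zero] at h
  have henergy := integral_abs_rpow_mul_deriv_arsinhProfile_sq_le hδ hm
  have hvariance := one_eighth_le_integral_sq_arsinhProfile hm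
  rw [arsinh_sinh, div_div_eq_mul_div] at henergy
  simp only [mul_zero, sub_zero] at h
  have := mul_le_mul_of_nonneg_left hvariance hL.le
  linarith

theorem stmt8_general (δ : ℝ) (h1 : 1/2 ≤ δ) :
    (∀ n : ℕ, 2 ≤ n → ∀ x ∈ Set.Icc (-1 : ℝ) 1, chiN δ n (-x) = -chiN δ n x) ∧
    (∀ n : ℕ, 2 ≤ n → ∫ x in (-1 : ℝ)..1, chiN δ n x = 0) ∧
    Filter.Tendsto (fun n : ℕ => ∫ x in (-1 : ℝ)..1, (chiN δ n x) ^ 2)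
      Filter.atTop (nhds 2) ∧
    ¬ ∃ L > (0 : ℝ), ∀ ψ : ℝ → ℝ, ContDiff ℝ 1 ψ →
        ∫ x in (-1 : ℝ)..1, |x| ^ (2 * δ) * (deriv ψ x) ^ 2 ≥
          L * ∫ x in (-1 : ℝ)..1, (ψ x - (1/2) * ∫ y in (-1 : ℝ)..1, ψ y) ^ 2 :=
  ⟨fun _ hn x _ => chiN_odd (by omega) x,
    fun _ hn => (chiN_odd (by omega)).intervalIntegral_eq_zero 1,
    tendsto_integral_sq_chiN h1,
    not_exists_weighted_poincare h1⟩

theorem stmt8 (δ : ℝ) (h1 : 1/2 ≤ δ) (h2 : δ < 1) :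
    (∀ n : ℕ, 2 ≤ n → ∀ x ∈ Set.Icc (-1 : ℝ) 1, chiN δ n (-x) = -chiN δ n x) ∧
    (∀ n : ℕ, 2 ≤ n → ∫ x in (-1 : ℝ)..1, chiN δ n x = 0) ∧
    Filter.Tendsto (fun n : ℕ => ∫ x in (-1 : ℝ)..1, (chiN δ n x) ^ 2)
      Filter.atTop (nhds 2) ∧
    ¬ ∃ L > (0 : ℝ), ∀ ψ : ℝ → ℝ, ContDiff ℝ 1 ψ →
        ∫ x in (-1 : ℝ)..1, |x| ^ (2 * δ) * (deriv ψ x) ^ 2 ≥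
          L * ∫ x in (-1 : ℝ)..1, (ψ x - (1/2) * ∫ y in (-1 : ℝ)..1, ψ y) ^ 2 :=
  stmt8_general δ h1
end

section
/- Let δ₁ ∈ [0,1), δ₂, δ₂', γ, γ' ≥ 0 with γ, γ' < 1, and δ₁' ∈ [0,1). Define α = (1−δ₁)^{-1}, α' = (1−δ₁')^{-1}, β = (1+δ₂−δ₁)α, β' = (1+δ₂'−δ₁')α', γ = δ₂(1+δ₂−δ₁)^{-1}, γ' = δ₂'(1+δ₂'−δ₁')^{-1}. Then for x = (x₁,x₂) ∈ ℝ^n × ℝ^m: if |x₁|_∞^{(1−δ₁,1−δ₁')} < t and |x₂|_∞^{(1−γ,1−γ')} < t, then the 'distance to origin' D(x;0) := |x₁|^{(1−δ₁,1−δ₁')} + |x₂|(|x₁|^{(δ₂,δ₂')} + |x₂|^{(γ,γ')})^{-1} satisfies D(x;0) < 4(n+m)·t. (Embedding of the scaled cube C_t into the ball B_Δ(0; 4(n+m)t).) -/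
/-! Both summands of `D(x;0)` are controlled by the sup norms: the second is at most
`|x₂|^{(1-γ,1-γ')}` after dropping `|x₁|^{(δ₂,δ₂')}` from the denominator, and
`|x| ≤ k |x|_∞` passes through the two-regime power with exponents in `[0,1]`, since such a power
is monotone and satisfies `(c b)^{(μ,μ')} ≤ c b^{(μ,μ')}` for `c ≥ 1`. -/

/-- The two-regime power: `a^{(μ,μ')} = a^μ` if `a ≤ 1` and `a^{μ'}` if `a ≥ 1`. -/
noncomputable def ppow (a μ μ' : ℝ) : ℝ := if a ≤ 1 then a ^ μ else a ^ μ'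

/-- The Euclidean norm on `ℝ^n` (the default `‖·‖` on `Fin n → ℝ` is the sup norm). -/
noncomputable def enorm' {n : ℕ} (x : Fin n → ℝ) : ℝ := Real.sqrt (∑ i, (x i) ^ 2)

open Set

section ppow

variable {a b c μ μ' : ℝ}

lemma ppow_nonneg (ha : 0 ≤ a) (μ μ' : ℝ) : 0 ≤ ppow a μ μ' := by
  unfold ppow; split <;> exact Real.rpow_nonneg ha _

lemma ppow_pos (ha : 0 < a) (μ μ' : ℝ) : 0 < ppow a μ μ' := by
  unfold ppow; split <;> exact Real.rpow_pos_of_pos ha _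

lemma ppow_le_ppow (hμ : 0 ≤ μ) (hμ' : 0 ≤ μ') (ha : 0 ≤ a) (hab : a ≤ b) :
    ppow a μ μ' ≤ ppow b μ μ' := by
  unfold ppow
  split_ifs with ha1 hb1 hb1
  · exact Real.rpow_le_rpow ha hab hμ
  · exact (Real.rpow_le_one ha ha1 hμ).trans (Real.one_le_rpow (not_le.mp hb1).le hμ')
  · exact absurd (hab.trans hb1) ha1
  · exact Real.rpow_le_rpow ha hab hμ'

lemma ppow_mul_le (hμ : μ ∈ Icc (0 : ℝ) 1) (hμ' : μ' ∈ Icc (0 : ℝ) 1) (hb : 0 ≤ b)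
    (hc : 1 ≤ c) : ppow (c * b) μ μ' ≤ c * ppow b μ μ' := by
  have hc0 : 0 ≤ c := zero_le_one.trans hc
  unfold ppow
  split_ifs with hcb hb1 hb1
  · rw [Real.mul_rpow hc0 hb]
    gcongr
    exact Real.rpow_le_self_of_one_le hc hμ.2
  · exact absurd ((le_mul_of_one_le_left hb hc).trans hcb) hb1
  · calc (c * b) ^ μ' ≤ c * b := Real.rpow_le_self_of_one_le (not_le.mp hcb).le hμ'.2
      _ ≤ c * b ^ μ := by gcongr; exact Real.self_le_rpow_of_le_one hb hb1 hμ.2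
  · rw [Real.mul_rpow hc0 hb]
    gcongr
    exact Real.rpow_le_self_of_one_le hc hμ'.2

lemma ppow_le_mul_ppow (hμ : μ ∈ Icc (0 : ℝ) 1) (hμ' : μ' ∈ Icc (0 : ℝ) 1) (ha : 0 ≤ a)
    (hb : 0 ≤ b) (hc : 1 ≤ c) (hab : a ≤ c * b) : ppow a μ μ' ≤ c * ppow b μ μ' :=
  (ppow_le_ppow hμ.1 hμ'.1 ha hab).trans (ppow_mul_le hμ hμ' hb hc)

lemma ppow_one_sub (ha : 0 < a) (μ μ' : ℝ) : ppow a (1 - μ) (1 - μ') = a / ppow a μ μ' := by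
  unfold ppow; split <;> rw [Real.rpow_sub ha, Real.rpow_one]

lemma mul_inv_add_ppow_le {P : ℝ} (ha : 0 ≤ a) (hP : 0 ≤ P) :
    a * (P + ppow a μ μ')⁻¹ ≤ ppow a (1 - μ) (1 - μ') := by
  rcases ha.eq_or_lt with rfl | ha
  · simpa using ppow_nonneg le_rfl (1 - μ) (1 - μ')
  rw [ppow_one_sub ha, div_eq_mul_inv]
  gcongr
  · exact ppow_pos ha μ μ'
  · exact le_add_of_nonneg_left hP

end ppow

lemma enorm'_nonneg {k : ℕ} (x : Fin k → ℝ) : 0 ≤ enorm' x := Real.sqrt_nonneg _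

lemma enorm'_le_card_mul_norm {k : ℕ} (x : Fin k → ℝ) : enorm' x ≤ k * ‖x‖ := by
  have hsum : ∑ i, x i ^ 2 ≤ ((k : ℝ) * ‖x‖) ^ 2 :=
    calc ∑ i, x i ^ 2 ≤ ∑ _i : Fin k, ‖x‖ ^ 2 := Finset.sum_le_sum fun i _ =>
          sq_le_sq.mpr (by rw [abs_norm]; exact norm_le_pi_norm x i)
      _ = k * ‖x‖ ^ 2 := by simp
      _ ≤ (k : ℝ) ^ 2 * ‖x‖ ^ 2 := by gcongr; exact_mod_cast Nat.le_self_pow two_ne_zero k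
      _ = ((k : ℝ) * ‖x‖) ^ 2 := by ring
  calc enorm' x ≤ Real.sqrt (((k : ℝ) * ‖x‖) ^ 2) := Real.sqrt_le_sqrt hsum
    _ = k * ‖x‖ := Real.sqrt_sq (by positivity)

lemma ppow_enorm'_le {k : ℕ} (hk : 1 ≤ k) {μ μ' : ℝ} (hμ : μ ∈ Icc (0 : ℝ) 1)
    (hμ' : μ' ∈ Icc (0 : ℝ) 1) (x : Fin k → ℝ) :
    ppow (enorm' x) μ μ' ≤ k * ppow ‖x‖ μ μ' :=
  ppow_le_mul_ppow hμ hμ' (enorm'_nonneg x) (norm_nonneg x) (by exact_mod_cast hk)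
    (enorm'_le_card_mul_norm x)

lemma mul_inv_one_add_sub_mem_Icc {δ₁ δ₂ : ℝ} (hδ₁ : δ₁ < 1) (hδ₂ : 0 ≤ δ₂) :
    δ₂ * (1 + δ₂ - δ₁)⁻¹ ∈ Icc (0 : ℝ) 1 := by
  have hd : 0 < 1 + δ₂ - δ₁ := by linarith
  exact ⟨by positivity, by rw [mul_inv_le_iff₀ hd]; linarith⟩

theorem stmt13_general (n m : ℕ) (hn : 1 ≤ n) (hm : 1 ≤ m)
    (δ₁ δ₁' δ₂ δ₂' t : ℝ)
    (hδ₁ : 0 ≤ δ₁) (hδ₁1 : δ₁ < 1) (hδ₁' : 0 ≤ δ₁') (hδ₁'1 : δ₁' < 1)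
    (hδ₂ : 0 ≤ δ₂) (hδ₂' : 0 ≤ δ₂')
    (x₁ : Fin n → ℝ) (x₂ : Fin m → ℝ)
    (h1 : ppow ‖x₁‖ (1 - δ₁) (1 - δ₁') < t)
    (h2 : ppow ‖x₂‖ (1 - δ₂ * (1 + δ₂ - δ₁)⁻¹) (1 - δ₂' * (1 + δ₂' - δ₁')⁻¹) < t) :
    ppow (enorm' x₁) (1 - δ₁) (1 - δ₁') +
      enorm' x₂ *
        (ppow (enorm' x₁) δ₂ δ₂' +
          ppow (enorm' x₂) (δ₂ * (1 + δ₂ - δ₁)⁻¹) (δ₂' * (1 + δ₂' - δ₁')⁻¹))⁻¹ <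
      4 * ((n : ℝ) + (m : ℝ)) * t := by
  have ht : 0 < t := (ppow_nonneg (norm_nonneg x₁) _ _).trans_lt h1
  have hμ₁ : 1 - δ₁ ∈ Icc (0 : ℝ) 1 := ⟨by linarith, by linarith⟩
  have hμ₁' : 1 - δ₁' ∈ Icc (0 : ℝ) 1 := ⟨by linarith, by linarith⟩
  have hγ := Icc.mem_iff_one_sub_mem.mp (mul_inv_one_add_sub_mem_Icc hδ₁1 hδ₂)
  have hγ' := Icc.mem_iff_one_sub_mem.mp (mul_inv_one_add_sub_mem_Icc hδ₁'1 hδ₂')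
  calc _ ≤ ppow (enorm' x₁) (1 - δ₁) (1 - δ₁') +
          ppow (enorm' x₂) (1 - δ₂ * (1 + δ₂ - δ₁)⁻¹) (1 - δ₂' * (1 + δ₂' - δ₁')⁻¹) := by
        gcongr
        exact mul_inv_add_ppow_le (enorm'_nonneg x₂) (ppow_nonneg (enorm'_nonneg x₁) _ _)
    _ ≤ n * ppow ‖x₁‖ (1 - δ₁) (1 - δ₁') +
          m * ppow ‖x₂‖ (1 - δ₂ * (1 + δ₂ - δ₁)⁻¹) (1 - δ₂' * (1 + δ₂' - δ₁')⁻¹) :=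
        add_le_add (ppow_enorm'_le hn hμ₁ hμ₁' x₁) (ppow_enorm'_le hm hγ hγ' x₂)
    _ < n * t + m * t := add_lt_add (by gcongr) (by gcongr)
    _ ≤ 4 * ((n : ℝ) + m) * t := by
      have : (0 : ℝ) ≤ (n + m) * t := by positivity
      linarith

theorem stmt13 (n m : ℕ) (hn : 1 ≤ n) (hm : 1 ≤ m)
    (δ₁ δ₁' δ₂ δ₂' t : ℝ)
    (hδ₁ : 0 ≤ δ₁) (hδ₁1 : δ₁ < 1) (hδ₁' : 0 ≤ δ₁') (hδ₁'1 : δ₁' < 1)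
    (hδ₂ : 0 ≤ δ₂) (hδ₂' : 0 ≤ δ₂') (ht : 0 < t)
    (x₁ : Fin n → ℝ) (x₂ : Fin m → ℝ)
    (h1 : ppow ‖x₁‖ (1 - δ₁) (1 - δ₁') < t)
    (h2 : ppow ‖x₂‖ (1 - δ₂ * (1 + δ₂ - δ₁)⁻¹) (1 - δ₂' * (1 + δ₂' - δ₁')⁻¹) < t) :
    ppow (enorm' x₁) (1 - δ₁) (1 - δ₁') +
      enorm' x₂ *
        (ppow (enorm' x₁) δ₂ δ₂' +
          ppow (enorm' x₂) (δ₂ * (1 + δ₂ - δ₁)⁻¹) (δ₂' * (1 + δ₂' - δ₁')⁻¹))⁻¹ <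
      4 * ((n : ℝ) + (m : ℝ)) * t :=
  stmt13_general n m hn hm δ₁ δ₁' δ₂ δ₂' t hδ₁ hδ₁1 hδ₁' hδ₁'1 hδ₂ hδ₂' x₁ x₂ h1 h2
end
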